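/- Let n, r be natural numbers, g : ℤ, Q a symmetric r×r integer matrix, A an n×r integer matrix with all entries in {0,1}, b : Fin n → ℤ with entries in {0,1}, j : Fin n, and β ∈ {0,1} ⊆ ℤ. Define the X-basis projector P on functions f : (Fin n → ZMod 2) → ℂ by (P f)(y) = (1/2) · ∑_{k∈{0,1}} (−1)^{β·((y j).val + k)} · f(Function.update y j k). Let ã : Fin (r+1) → ℤ be row j of A extended by a final entry 0; let A'' be the n×(r+1) integer matrix whose first r columns are those of A except that row j is replaced by zero, and whose last column is the standard basis vector e_j; let b' equal b except that its j-th entry is 0; and let Q^{(X)} be the (r+1)×(r+1) matrix obtained by extending Q with a zero last row and column and adding 2β • diag(ã + e_{last}), where e_{last} : Fin (r+1) → ℤ is the last standard basis vector. Then Real.sqrt 2 • (P ψ[g,Q,A,b]) = ψ[g − 4·β·b_j, Q^{(X)}, A'', b'] (the right-hand side being a rank-(r+1) quadratic form expansion with normalisation 1/√(2^{r+1})). -/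
import Mathlib


open Matrix

/-- The integer lift of a `ZMod 2` vector: a bit vector. -/
def intify {r : ℕ} (v : Fin r → ZMod 2) : Fin r → ℤ := fun k => ((v k).val : ℤ)

/-- Entrywise reduction of an integer vector modulo 2. -/
def red₂ {n : ℕ} (x : Fin n → ℤ) : Fin n → ZMod 2 := fun j => (x j : ZMod 2)

/-- The indicator function (standard basis vector) of `v : Fin n → ZMod 2`. -/
def ind {n : ℕ} (v : Fin n → ZMod 2) : (Fin n → ZMod 2) → ℂ := fun y => if y = v then 1 else 0

/-- The eighth root of unity `τ = e^{iπ/4} = √i`. -/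
noncomputable def τ : ℂ := Complex.exp (Real.pi * Complex.I / 4)

/-- The quadratic form expansion `ψ[g,Q,A,b]`:
`(τ^g / √(2^m)) • ∑_{bit vectors x} i^{xᵀ Q x} • e_{red₂(A x + b)}`. -/
noncomputable def qfe (n m : ℕ) (g : ℤ) (Q : Matrix (Fin m) (Fin m) ℤ)
    (A : Matrix (Fin n) (Fin m) ℤ) (b : Fin n → ℤ) : (Fin n → ZMod 2) → ℂ :=
  (τ ^ g / (Real.sqrt (2 ^ m) : ℂ)) •
    ∑ v : Fin m → ZMod 2,
      (Complex.I ^ (intify v ⬝ᵥ Q.mulVec (intify v))) • ind (red₂ (A.mulVec (intify v) + b))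

/- ### Auxiliary lemmas -/

lemma snoc_dot {r : ℕ} (u w : Fin r → ℤ) (s t : ℤ) :
    (Fin.snoc u s : Fin (r+1) → ℤ) ⬝ᵥ (Fin.snoc w t) = u ⬝ᵥ w + s * t := by
  simp [dotProduct, Fin.sum_univ_castSucc]

lemma intify_snoc {r : ℕ} (v : Fin r → ZMod 2) (c : ZMod 2) :
    intify (Fin.snoc v c) = Fin.snoc (intify v) ((c.val : ℤ)) := by
  funext k
  refine Fin.lastCases ?_ ?_ k <;> simp [intify]

lemma val_mul_self (c : ZMod 2) : ((c.val:ℤ)) * (c.val:ℤ) = (c.val:ℤ) := by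
  have h : c.val < 2 := c.val_lt
  interval_cases h' : c.val <;> simp

lemma intify_sq {r : ℕ} (v : Fin r → ZMod 2) (k : Fin r) :
    intify v k * intify v k = intify v k := val_mul_self (v k)

lemma dvd_val_sub (t : ℤ) : (2:ℤ) ∣ (((t : ZMod 2).val : ℤ) - t) := by
  have h : (((((t : ZMod 2).val : ℤ) - t : ℤ)) : ZMod 2) = 0 := by
    push_cast
    simp [ZMod.natCast_val, ZMod.cast_id]
  exact (ZMod.intCast_zmod_eq_zero_iff_dvd _ 2).mp h

lemma neg_one_zpow_congr {s t : ℤ} (h : (2:ℤ) ∣ s - t) : ((-1:ℂ))^s = (-1:ℂ)^t := by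
  obtain ⟨k, hk⟩ := h
  have hs : s = t + 2*k := by linarith
  rw [hs, zpow_add₀ (by norm_num : (-1:ℂ) ≠ 0), _root_.zpow_mul]
  norm_num

lemma I_zpow_two_mul (m : ℤ) : Complex.I ^ (2*m) = (-1:ℂ)^m := by
  rw [_root_.zpow_mul, zpow_two, Complex.I_mul_I]

lemma tau_ne : τ ≠ 0 := Complex.exp_ne_zero _

lemma tau_pow_four : τ ^ (4:ℤ) = -1 := by
  have h : τ ^ (4:ℕ) = -1 := by
    unfold τ
    rw [← Complex.exp_nat_mul]
    have h4 : ((4:ℕ):ℂ) * (↑Real.pi * Complex.I / 4) = ↑Real.pi * Complex.I := by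
      push_cast; ring
    rw [h4, Complex.exp_pi_mul_I]
  rw [show (4:ℤ) = ((4:ℕ):ℤ) from rfl, zpow_natCast, h]

lemma tau_zpow_shift (g m : ℤ) : τ ^ (g - 4*m) = τ^g * (-1:ℂ)^m := by
  rw [zpow_sub₀ tau_ne, _root_.zpow_mul, tau_pow_four, div_eq_mul_inv]
  congr 1
  rw [← _root_.zpow_neg]
  exact neg_one_zpow_congr ⟨-m, by ring⟩

lemma update_eq_iff' {n : ℕ} (y m : Fin n → ZMod 2) (j : Fin n) (k : ZMod 2) :
    Function.update y j k = m ↔ (k = m j ∧ Function.update y j (m j) = m) := by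
  constructor
  · intro h
    have hk : k = m j := by rw [← h]; simp
    exact ⟨hk, by rw [← hk]; exact h⟩
  · rintro ⟨hk, hP⟩; rw [hk]; exact hP

lemma eq_update_iff' {n : ℕ} (y m : Fin n → ZMod 2) (j : Fin n) (c : ZMod 2) :
    y = Function.update m j c ↔ (c = y j ∧ Function.update y j (m j) = m) := by
  constructor
  · intro h
    have hc : c = y j := by rw [h]; simp
    refine ⟨hc, ?_⟩
    funext l
    rcases eq_or_ne l j with rfl | hl
    · simp
    · have h2 := congrFun h l
      simp only [Function.update_of_ne hl] at h2 ⊢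
      exact h2
  · rintro ⟨hc, hP⟩
    funext l
    rcases eq_or_ne l j with rfl | hl
    · simp only [Function.update_self]
      exact hc.symm
    · have h2 := congrFun hP l
      simp only [Function.update_of_ne hl] at h2 ⊢
      exact h2

lemma sum_snoc_split {r : ℕ} (F : (Fin (r+1) → ZMod 2) → ℂ) :
    ∑ w : Fin (r+1) → ZMod 2, F w = ∑ c : ZMod 2, ∑ v : Fin r → ZMod 2, F (Fin.snoc v c) := by
  rw [← Equiv.sum_comp (Fin.snocEquiv (fun _ => ZMod 2)) F, Fintype.sum_prod_type]
  rfl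

/-- The `X`-basis projector onto outcome `β` on qubit `j` maps a rank-`r`
quadratic form expansion (times `√2`) to the rank-`(r+1)` expansion with `g ↦ g - 4βb_j`,
Gram matrix extended by a zero row/column plus `2β·diag(ã + e_last)`, row `j` of `A` zeroed
with new column `e_j`, and `b_j ↦ 0`. -/
theorem qfe_measX
    (n r : ℕ) (g : ℤ) (Q : Matrix (Fin r) (Fin r) ℤ) (hQ : Q.IsSymm)
    (A : Matrix (Fin n) (Fin r) ℤ) (hA : ∀ l c, A l c = 0 ∨ A l c = 1)
    (b : Fin n → ℤ) (hb : ∀ l, b l = 0 ∨ b l = 1)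
    (j : Fin n) (β : ℤ) (hβ : β = 0 ∨ β = 1) :
    (fun y => (Real.sqrt 2 : ℂ) * ((1 / 2 : ℂ) *
        ∑ k : ZMod 2, ((-1 : ℂ)) ^ (β * (((y j).val : ℤ) + (k.val : ℤ))) *
          qfe n r g Q A b (Function.update y j k)))
      = qfe n (r + 1) (g - 4 * β * b j)
          -- Q⁽ˣ⁾ : extend Q by a zero last row and column, then add 2β·diag(ã + e_last)
          (Matrix.of (Fin.snoc (fun k => (Fin.snoc (Q k) 0 : Fin (r+1) → ℤ)) (0 : Fin (r+1) → ℤ))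
            + (2 * β) • Matrix.diagonal
                ((Fin.snoc (fun k => A j k) 0 : Fin (r+1) → ℤ)
                  + fun k => if k = Fin.last r then 1 else 0))
          -- A'' : first r columns of A with row j zeroed, last column e_j
          (Matrix.of fun l => Fin.snoc (fun c => if l = j then 0 else A l c)
              (if l = j then 1 else 0))
          -- b' : b with entry j set to 0
          (Function.update b j 0) := by
  classical
  funext y
  -- the quadratic form on snoc vectors
  have hQform : ∀ (v : Fin r → ZMod 2) (c : ZMod 2),
      intify (Fin.snoc v c) ⬝ᵥ
        (Matrix.of (Fin.snoc (fun k => (Fin.snoc (Q k) 0 : Fin (r+1) → ℤ)) (0 : Fin (r+1) → ℤ))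
          + (2 * β) • Matrix.diagonal
              ((Fin.snoc (fun k => A j k) 0 : Fin (r+1) → ℤ)
                + fun k => if k = Fin.last r then 1 else 0)).mulVec (intify (Fin.snoc v c))
      = intify v ⬝ᵥ Q.mulVec (intify v)
          + 2*β*(A.mulVec (intify v) j + ((c.val : ℤ))) := by
    intro v c
    rw [intify_snoc, Matrix.add_mulVec, dotProduct_add]
    have h1 : (Fin.snoc (intify v) ((c.val:ℤ)) : Fin (r+1) → ℤ) ⬝ᵥ
        (Matrix.of (Fin.snoc (fun k => (Fin.snoc (Q k) 0 : Fin (r+1) → ℤ))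
          (0 : Fin (r+1) → ℤ))).mulVec (Fin.snoc (intify v) ((c.val:ℤ)))
        = intify v ⬝ᵥ Q.mulVec (intify v) := by
      have hmv : (Matrix.of (Fin.snoc (fun k => (Fin.snoc (Q k) 0 : Fin (r+1) → ℤ))
          (0 : Fin (r+1) → ℤ))).mulVec (Fin.snoc (intify v) ((c.val:ℤ)))
          = Fin.snoc (Q.mulVec (intify v)) 0 := by
        funext k
        refine Fin.lastCases ?_ ?_ k
        · show (fun jj => Matrix.of _ (Fin.last r) jj) ⬝ᵥ _ = _
          simp [dotProduct]
        · intro i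
          show (fun jj => Matrix.of _ i.castSucc jj) ⬝ᵥ _ = _
          simp only [Matrix.of_apply, Fin.snoc_castSucc]
          have hs := snoc_dot (Q i) (intify v) 0 ((c.val:ℤ))
          simpa [Matrix.mulVec, dotProduct] using hs
      rw [hmv, snoc_dot]
      ring
    have h2 : (Fin.snoc (intify v) ((c.val:ℤ)) : Fin (r+1) → ℤ) ⬝ᵥ
        ((2 * β) • Matrix.diagonal
          ((Fin.snoc (fun k => A j k) 0 : Fin (r+1) → ℤ)
            + fun k => if k = Fin.last r then 1 else 0)).mulVec
          (Fin.snoc (intify v) ((c.val:ℤ)))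
        = 2*β*(A.mulVec (intify v) j + ((c.val:ℤ))) := by
      rw [Matrix.smul_mulVec, dotProduct_smul]
      have hd : (Fin.snoc (intify v) ((c.val:ℤ)) : Fin (r+1) → ℤ) ⬝ᵥ
          (Matrix.diagonal ((Fin.snoc (fun k => A j k) 0 : Fin (r+1) → ℤ)
            + fun k => if k = Fin.last r then 1 else 0)).mulVec
            (Fin.snoc (intify v) ((c.val:ℤ)))
          = A.mulVec (intify v) j + ((c.val:ℤ)) := by
        simp only [dotProduct, Matrix.mulVec_diagonal, Pi.add_apply]
        rw [Fin.sum_univ_castSucc]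
        simp only [Fin.snoc_castSucc, Fin.snoc_last]
        have hne : ∀ i : Fin r, (i.castSucc = Fin.last r) = False := by
          intro i; simp [(Fin.castSucc_lt_last i).ne]
        simp only [hne, if_false, if_pos rfl, add_zero, zero_add, if_true,
          eq_self_iff_true, one_mul]
        have hterm : ∀ i : Fin r,
            intify v i * (A j i * intify v i) = A j i * intify v i := by
          intro i
          calc intify v i * (A j i * intify v i) = A j i * (intify v i * intify v i) := by ring
          _ = A j i * intify v i := by rw [intify_sq]
        rw [Finset.sum_congr rfl (fun i _ => hterm i), val_mul_self]
        simp [Matrix.mulVec, dotProduct]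
      rw [hd]
      simp [smul_eq_mul]
    rw [h1, h2]
  -- the new A and b on snoc vectors
  have hArow : ∀ (v : Fin r → ZMod 2) (c : ZMod 2),
      red₂ ((Matrix.of fun l => Fin.snoc (fun cc => if l = j then 0 else A l cc)
          (if l = j then 1 else 0)).mulVec (intify (Fin.snoc v c)) + Function.update b j 0)
      = Function.update (red₂ (A.mulVec (intify v) + b)) j c := by
    intro v c
    rw [intify_snoc]
    funext l
    have hrow : (Matrix.of fun l => Fin.snoc (fun cc => if l = j then 0 else A l cc)
        (if l = j then 1 else 0)).mulVec (Fin.snoc (intify v) ((c.val:ℤ))) l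
        = (fun cc => if l = j then 0 else A l cc) ⬝ᵥ intify v
          + (if l = j then 1 else 0) * ((c.val:ℤ)) := by
      exact snoc_dot (fun cc => if l = j then 0 else A l cc) (intify v)
        (if l = j then 1 else 0) ((c.val:ℤ))
    rcases eq_or_ne l j with rfl | hl
    · simp only [red₂, Pi.add_apply, hrow, if_pos rfl, Function.update_self]
      simp [dotProduct, ZMod.natCast_val, ZMod.cast_id]
    · simp only [red₂, Pi.add_apply, hrow, if_neg hl, Function.update_of_ne hl]
      simp [Matrix.mulVec, dotProduct]
  -- nonzero facts and the constant identity
  have hC : (Real.sqrt 2 : ℂ) * ((1:ℂ)/2) * (τ^g / ((Real.sqrt (2^r) : ℝ) : ℂ))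
      = τ^g / ((Real.sqrt (2^(r+1)) : ℝ) : ℂ) := by
    have h2 : Real.sqrt (2^(r+1)) = Real.sqrt 2 * Real.sqrt (2^r) := by
      rw [pow_succ, mul_comm]
      exact Real.sqrt_mul (by norm_num) _
    have ha : (Real.sqrt 2 : ℂ) * (Real.sqrt 2 : ℂ) = 2 := by
      norm_cast
      exact Real.mul_self_sqrt (by norm_num)
    have hs2 : ((Real.sqrt 2 : ℝ) : ℂ) ≠ 0 :=
      Complex.ofReal_ne_zero.mpr (ne_of_gt (Real.sqrt_pos.mpr (by norm_num)))
    have hsr : ((Real.sqrt (2^r) : ℝ) : ℂ) ≠ 0 :=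
      Complex.ofReal_ne_zero.mpr (ne_of_gt (Real.sqrt_pos.mpr (by positivity)))
    have key : ((Real.sqrt 2:ℝ):ℂ) * ((1:ℂ)/2) = 1 / ((Real.sqrt 2:ℝ):ℂ) := by
      rw [eq_div_iff hs2]
      linear_combination (1/2 : ℂ) * ha
    rw [h2]
    push_cast
    rw [key, div_mul_div_comm, one_mul]
  set T : ℂ := ∑ v : Fin r → ZMod 2,
    (τ^g / ((Real.sqrt (2^(r+1)) : ℝ) : ℂ)) *
      ((-1:ℂ) ^ (β * (((y j).val : ℤ) + (A.mulVec (intify v) j + b j))) *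
        Complex.I ^ (intify v ⬝ᵥ Q.mulVec (intify v))) *
      (if Function.update y j (red₂ (A.mulVec (intify v) + b) j)
          = red₂ (A.mulVec (intify v) + b) then 1 else 0) with hT
  trans T
  · -- LHS = T
    simp only [qfe, Pi.smul_apply, smul_eq_mul, Finset.sum_apply, ind]
    simp only [Finset.mul_sum]
    rw [Finset.sum_comm, hT]
    refine Finset.sum_congr rfl (fun v _ => ?_)
    set Z := (if Function.update y j (red₂ (A.mulVec (intify v) + b) j)
        = red₂ (A.mulVec (intify v) + b) then (1:ℂ) else 0) with hZ
    have hM : ∀ k : ZMod 2,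
        (if Function.update y j k = red₂ (A.mulVec (intify v) + b) then (1:ℂ) else 0)
        = (if k = red₂ (A.mulVec (intify v) + b) j then (1:ℂ) else 0) * Z := by
      intro k
      rw [hZ]
      by_cases h1 : k = red₂ (A.mulVec (intify v) + b) j <;>
        by_cases h2 : Function.update y j (red₂ (A.mulVec (intify v) + b) j)
          = red₂ (A.mulVec (intify v) + b) <;>
        simp [update_eq_iff', h1, h2]
    simp only [hM]
    rw [Finset.sum_eq_single (red₂ (A.mulVec (intify v) + b) j), if_pos rfl]
    · have hsgn : ((-1:ℂ)) ^ (β * (((y j).val:ℤ)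
          + ((red₂ (A.mulVec (intify v) + b) j).val : ℤ)))
          = (-1:ℂ) ^ (β * (((y j).val:ℤ) + (A.mulVec (intify v) j + b j))) := by
        apply neg_one_zpow_congr
        have hdv := dvd_val_sub ((A.mulVec (intify v)) j + b j)
        have hred : red₂ (A.mulVec (intify v) + b) j
            = (((A.mulVec (intify v)) j + b j : ℤ) : ZMod 2) := rfl
        rw [hred]
        obtain ⟨k, hk⟩ := hdv
        exact ⟨β * k, by linear_combination β * hk⟩
      rw [hsgn]
      linear_combination ((-1:ℂ) ^ (β * (((y j).val:ℤ) + (A.mulVec (intify v) j + b j)))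
        * Complex.I ^ (intify v ⬝ᵥ Q.mulVec (intify v)) * Z) * hC
    · intro k _ hk
      rw [if_neg hk]
      ring
    · intro h
      exact absurd (Finset.mem_univ _) h
  · -- T = RHS : prove RHS = T and flip
    symm
    simp only [qfe, Pi.smul_apply, smul_eq_mul, Finset.sum_apply, ind]
    rw [sum_snoc_split]
    simp only [hQform, hArow]
    simp only [Finset.mul_sum]
    rw [Finset.sum_comm, hT]
    refine Finset.sum_congr rfl (fun v _ => ?_)
    set Z := (if Function.update y j (red₂ (A.mulVec (intify v) + b) j)
        = red₂ (A.mulVec (intify v) + b) then (1:ℂ) else 0) with hZ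
    have hM : ∀ c : ZMod 2,
        (if y = Function.update (red₂ (A.mulVec (intify v) + b)) j c then (1:ℂ) else 0)
        = (if c = y j then (1:ℂ) else 0) * Z := by
      intro c
      rw [hZ]
      by_cases h1 : c = y j <;>
        by_cases h2 : Function.update y j (red₂ (A.mulVec (intify v) + b) j)
          = red₂ (A.mulVec (intify v) + b) <;>
        simp [eq_update_iff', h1, h2]
    simp only [hM]
    rw [Finset.sum_eq_single (y j), if_pos rfl]
    · have h1 : τ^(g - 4*β*b j) = τ^g * (-1:ℂ)^(β * b j) := by
        rw [show g - 4*β*b j = g - 4*(β*b j) by ring]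
        exact tau_zpow_shift g (β * b j)
      have h2 : Complex.I ^ (intify v ⬝ᵥ Q.mulVec (intify v)
            + 2*β*(A.mulVec (intify v) j + (((y j).val:ℤ))))
          = Complex.I ^ (intify v ⬝ᵥ Q.mulVec (intify v))
            * (-1:ℂ)^(β*(A.mulVec (intify v) j + ((y j).val:ℤ))) := by
        rw [zpow_add₀ Complex.I_ne_zero,
          show 2*β*(A.mulVec (intify v) j + (((y j).val:ℤ)))
            = 2*(β*(A.mulVec (intify v) j + ((y j).val:ℤ))) by ring,
          I_zpow_two_mul]
      have h3 : ((-1:ℂ))^(β * b j) * (-1:ℂ)^(β*(A.mulVec (intify v) j + ((y j).val:ℤ)))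
          = (-1:ℂ)^(β * (((y j).val:ℤ) + (A.mulVec (intify v) j + b j))) := by
        rw [← zpow_add₀ (by norm_num : (-1:ℂ) ≠ 0)]
        congr 1
        ring
      rw [h1, h2]
      linear_combination (τ^g * Complex.I ^ (intify v ⬝ᵥ Q.mulVec (intify v)) * Z
        / ((Real.sqrt (2^(r+1)) : ℝ) : ℂ)) * h3
    · intro c _ hc
      rw [if_neg hc]
      ring
    · intro h
      exact absurd (Finset.mem_univ _) h
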